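/- G is generated by the four elements (0,⟨⟩), a, b₀, and t; in particular, G is finitely generated. -/

import Mathlib

/-- Generators of the group `K`: tree vertices `(n,τ)`, the letter `a`, and letters `bᵢ`. -/
inductive KGen : Type
  | vert : ℕ → List ℤ → KGen
  | a : KGen
  | b : ℤ → KGen
  deriving DecidableEq

/-- The parent `(n,τ)⁻` of a vertex `(n,τ)` of the tree `T`. -/
def parent : ℕ → List ℤ → ℕ × List ℤ
  | n, [] => (n + 1, [])
  | n, τ => (n, τ.dropLast)

/-- Words over an alphabet `α` (a letter together with `true` for the letter itself,
`false` for its formal inverse). -/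
abbrev Word (α : Type) := List (α × Bool)

/-- The word `u(x,y) = x y x² y x³ y ⋯ x¹⁰⁰ y`. -/
def uWord {α : Type} (x y : α) : Word α :=
  (List.range 100).flatMap fun k => List.replicate (k + 1) (x, true) ++ [(y, true)]

/-- The relator words of the presentation of `K`:
`u((n,τ),a) ((n,τ)⁻)⁻¹` and `u((n,τ),bᵢ) ((n,τ⌢⟨i⟩))⁻¹`. -/
def KRelWords : Set (Word KGen) :=
  { w | (∃ (n : ℕ) (τ : List ℤ), w = uWord (KGen.vert n τ) KGen.a ++ [(KGen.vert (parent n τ).1 (parent n τ).2, false)]) ∨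
        (∃ (n : ℕ) (τ : List ℤ) (i : ℤ), w = uWord (KGen.vert n τ) (KGen.b i) ++ [(KGen.vert n (τ ++ [i]), false)]) }

/-- The relators of `K` as elements of the free group. -/
def KRels : Set (FreeGroup KGen) := FreeGroup.mk '' KRelWords

/-- The group `K`. -/
abbrev K := PresentedGroup KRels

/-- Generators of `G`: the generators of `K` together with the stable letter `t = none`. -/
abbrev GGen := Option KGen

/-- The relator words of the presentation of `G = ⟨K, t ∣ t bᵢ t⁻¹ = b_{i+1}⟩`:
the relators of `K` together with `t bᵢ t⁻¹ b_{i+1}⁻¹`. -/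
def GRelWords : Set (Word GGen) :=
  (fun w : Word KGen => w.map fun p => (some p.1, p.2)) '' KRelWords ∪
    { w | ∃ i : ℤ, w = [((none : GGen), true), (some (KGen.b i), true), ((none : GGen), false),
        (some (KGen.b (i + 1)), false)] }

/-- The relators of `G` as elements of the free group. -/
def GRels : Set (FreeGroup GGen) := FreeGroup.mk '' GRelWords

/-- The group `G`, the HNN extension of `K` along `bᵢ ↦ b_{i+1}`. -/
abbrev G := PresentedGroup GRels

/-- The vertex `(n,τ)` as an element of `G`. -/
def gvert (n : ℕ) (τ : List ℤ) : G := PresentedGroup.of (some (KGen.vert n τ))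

/-- `a` as an element of `G`. -/
def ga : G := PresentedGroup.of (some KGen.a)

/-- `bᵢ` as an element of `G`. -/
def gb (i : ℤ) : G := PresentedGroup.of (some (KGen.b i))

/-- The stable letter `t` as an element of `G`. -/
def gt' : G := PresentedGroup.of (none : GGen)

/-
Every vertex is a word in `(0,⟨⟩)`, `a` and the `bᵢ`: the relation `(n+1,⟨⟩) = u((n,⟨⟩),a)` reaches
all of `(n,⟨⟩)` by induction on `n`, and `(n,τ⌢⟨i⟩) = u((n,τ),bᵢ)` then reaches `(n,τ)` by
induction on `τ`. All the `bᵢ` are conjugates `tⁱ b₀ t⁻ⁱ`, so the subgroup generated by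
`(0,⟨⟩)`, `a`, `b₀`, `t` contains every generator of the presentation.
-/

namespace PresentedGroup

variable {α : Type*} {rels : Set (FreeGroup α)}

theorem mk_freeGroupMk (w : List (α × Bool)) :
    mk rels (FreeGroup.mk w) = (w.map fun p => cond p.2 (of p.1) (of p.1)⁻¹).prod := by
  have : mk rels = FreeGroup.lift of := by ext; simp [of]
  rw [this, FreeGroup.lift_mk]

theorem of_eq_prod_of_mk_append_inv_mem {w : List (α × Bool)} {z : α}
    (h : FreeGroup.mk (w ++ [(z, false)]) ∈ rels) :
    (of z : PresentedGroup rels) = (w.map fun p => cond p.2 (of p.1) (of p.1)⁻¹).prod := by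
  have h1 := one_of_mem h
  rw [mk_freeGroupMk, List.map_append, List.prod_append] at h1
  simp only [List.map_cons, List.map_nil, cond_false, List.prod_cons, List.prod_nil,
    mul_one] at h1
  exact (mul_inv_eq_one.mp h1).symm

end PresentedGroup

def uProd {M : Type*} [Monoid M] (x y : M) : M :=
  ((List.range 100).flatMap fun k => List.replicate (k + 1) x ++ [y]).prod

theorem prod_map_uWord {α : Type} {M : Type*} [Group M] (f : α → M) (x y : α) :
    ((uWord x y).map fun p => cond p.2 (f p.1) (f p.1)⁻¹).prod = uProd (f x) (f y) := by
  simp [uWord, uProd, List.map_flatMap]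

theorem uProd_mem {M S : Type*} [Monoid M] [SetLike S M] [SubmonoidClass S M] {s : S} {x y : M}
    (hx : x ∈ s) (hy : y ∈ s) : uProd x y ∈ s := by
  refine list_prod_mem fun g hg => ?_
  simp only [List.mem_flatMap, List.mem_append, List.mem_replicate, List.mem_singleton] at hg
  obtain ⟨_, _, ⟨_, rfl⟩ | rfl⟩ := hg
  exacts [hx, hy]

theorem eq_zpow_mul_mul_zpow_neg_of_forall_add_one {M : Type*} [Group M] {f : ℤ → M} {c : M}
    (h : ∀ i, f (i + 1) = c * f i * c⁻¹) (i : ℤ) : f i = c ^ i * f 0 * c ^ (-i) := by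
  induction i using Int.induction_on with
  | zero => simp
  | succ i ih => rw [h, ih]; group
  | pred i ih =>
    have hc := h (-i - 1)
    rw [sub_add_cancel, ih] at hc
    rw [show f (-i - 1) = c⁻¹ * (c * f (-i - 1) * c⁻¹) * c by group, ← hc]
    group

theorem some_uWord_mem_GRels {x y z : KGen} (h : uWord x y ++ [(z, false)] ∈ KRelWords) :
    FreeGroup.mk (uWord (some x) (some y) ++ [(some z, false)]) ∈ GRels :=
  ⟨_, Or.inl ⟨_, h, by simp [uWord, List.map_flatMap]⟩, rfl⟩

theorem gvert_parent (n : ℕ) (τ : List ℤ) :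
    gvert (parent n τ).1 (parent n τ).2 = uProd (gvert n τ) ga := by
  rw [gvert, PresentedGroup.of_eq_prod_of_mk_append_inv_mem
    (some_uWord_mem_GRels (Or.inl ⟨n, τ, rfl⟩)), prod_map_uWord]
  rfl

theorem gvert_append_singleton (n : ℕ) (τ : List ℤ) (i : ℤ) :
    gvert n (τ ++ [i]) = uProd (gvert n τ) (gb i) := by
  rw [gvert, PresentedGroup.of_eq_prod_of_mk_append_inv_mem
    (some_uWord_mem_GRels (Or.inr ⟨n, τ, i, rfl⟩)), prod_map_uWord]
  rfl

theorem gb_add_one (i : ℤ) : gb (i + 1) = gt' * gb i * gt'⁻¹ := by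
  rw [gb, PresentedGroup.of_eq_prod_of_mk_append_inv_mem (rels := GRels)
    (w := [(none, true), (some (KGen.b i), true), (none, false)]) ⟨_, Or.inr ⟨i, rfl⟩, rfl⟩]
  simp [gt', gb, mul_assoc]

theorem gb_eq_zpow_mul_mul_zpow_neg (i : ℤ) : gb i = gt' ^ i * gb 0 * gt' ^ (-i) :=
  eq_zpow_mul_mul_zpow_neg_of_forall_add_one gb_add_one i

theorem closure_gvert_ga_gb_gt'_eq_top : Subgroup.closure {gvert 0 [], ga, gb 0, gt'} = ⊤ := by
  set H := Subgroup.closure {gvert 0 [], ga, gb 0, gt'}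
  have hv₀ : gvert 0 [] ∈ H := Subgroup.subset_closure (by simp)
  have ha : ga ∈ H := Subgroup.subset_closure (by simp)
  have hb₀ : gb 0 ∈ H := Subgroup.subset_closure (by simp)
  have ht : gt' ∈ H := Subgroup.subset_closure (by simp)
  have hb (i : ℤ) : gb i ∈ H := by
    rw [gb_eq_zpow_mul_mul_zpow_neg]
    exact H.mul_mem (H.mul_mem (H.zpow_mem ht i) hb₀) (H.zpow_mem ht (-i))
  have hspine (n : ℕ) : gvert n [] ∈ H := by
    induction n with
    | zero => exact hv₀
    | succ n ih => exact gvert_parent n [] ▸ uProd_mem ih ha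
  have hv (n : ℕ) (τ : List ℤ) : gvert n τ ∈ H := by
    induction τ using List.reverseRecOn with
    | nil => exact hspine n
    | append_singleton τ i ih => exact gvert_append_singleton n τ i ▸ uProd_mem ih (hb i)
  refine (Subgroup.eq_top_iff' H).mpr (PresentedGroup.generated_by GRels H ?_)
  rintro (_ | (_ | _ | _))
  exacts [ht, hv _ _, ha, hb _]

/-- `G` is generated by `(0,⟨⟩)`, `a`, `b₀` and `t`; in particular it is finitely generated. -/
theorem stmt8 : Subgroup.closure {gvert 0 [], ga, gb 0, gt'} = ⊤ ∧ Group.FG G :=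
  ⟨closure_gvert_ga_gb_gt'_eq_top,
    Group.fg_iff.mpr ⟨_, closure_gvert_ga_gb_gt'_eq_top, Set.toFinite _⟩⟩
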